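/- arXiv:2505.15780 — 4 statements merged into one kernel-verified Lean document; each statement's English description precedes it below -/
import Mathlib

section
/- Let V be a finite-dimensional complex inner product space of complex dimension n (inner product ⟨·,·⟩ conjugate-linear in the first argument), with Borel σ-algebra and additive Haar measure μ, and let Ω = {v ∈ V : ‖v‖ < 1} be the open unit ball. Then for all complex-linear functionals θ, φ : V → ℂ with Riesz representatives x_θ, x_φ ∈ V (characterized by θ(v) = ⟨x_θ, v⟩ and φ(v) = ⟨x_φ, v⟩ for all v), one has ((n+1)/μ(Ω)) · ∫_Ω θ(η) · conj(φ(η)) dμ(η) = ⟨x_θ, x_φ⟩. -/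
/-!
The sesquilinear form `B x y = ∫_{‖η‖<1} ⟪x, η⟫ ⟪η, y⟫ dμ` is invariant under unitary maps,
since a linear isometry preserves every Haar measure (it preserves the measure of the unit
ball). Invariance under the reflection fixing `x` and negating `y` gives `B x y = 0` when
`x ⊥ y`, and invariance under permutations of an orthonormal basis `b` makes the values
`B (b i) (b i)` equal. Their sum is `∫_{‖η‖<1} ‖η‖² dμ = 2n / (2n + 2) · μ(Ω)` by polar
coordinates in real dimension `2n`, hence `B = μ(Ω) / (n + 1) · ⟪·, ·⟫`.
-/

open MeasureTheory Metric Set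
open scoped ComplexInnerProductSpace

section Isometry

variable {𝕜 E : Type*} [Semiring 𝕜] [NormedAddCommGroup E] [Module 𝕜 E] [ProperSpace E]
  [MeasurableSpace E] [BorelSpace E] (μ : Measure E) [μ.IsAddHaarMeasure]

theorem LinearIsometryEquiv.measurePreserving_addHaar (f : E ≃ₗᵢ[𝕜] E) :
    MeasurePreserving f μ μ := by
  refine ⟨f.continuous.measurable, ?_⟩
  have : (μ.map f).IsAddHaarMeasure := f.toContinuousLinearEquiv.isAddHaarMeasure_map μ
  have hsmul := Measure.isAddLeftInvariant_eq_smul (μ.map f) μ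
  have hball : μ.map f (ball 0 1) = μ (ball 0 1) := by
    rw [Measure.map_apply f.continuous.measurable measurableSet_ball, f.preimage_ball, map_zero]
  rw [hsmul, Measure.smul_apply, ENNReal.smul_def, smul_eq_mul, ENNReal.mul_eq_right
    (measure_ball_pos μ 0 one_pos).ne' measure_ball_lt_top.ne, ENNReal.coe_eq_one] at hball
  rw [hsmul, hball, one_smul]

theorem LinearIsometryEquiv.setIntegral_ball_comp {F : Type*} [NormedAddCommGroup F]
    [NormedSpace ℝ F] (f : E ≃ₗᵢ[𝕜] E) (g : E → F) (r : ℝ) :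
    ∫ x in ball 0 r, g (f x) ∂μ = ∫ x in ball 0 r, g x ∂μ := by
  simpa [f.preimage_ball] using (f.measurePreserving_addHaar μ).setIntegral_preimage_emb
    f.toHomeomorph.measurableEmbedding g (ball 0 r)

end Isometry

section Radial

variable {E : Type*} [NormedAddCommGroup E] [NormedSpace ℝ E] [FiniteDimensional ℝ E]
  [Nontrivial E] [MeasurableSpace E] [BorelSpace E] (μ : Measure E) [μ.IsAddHaarMeasure]

theorem setIntegral_unitBall_norm_pow (p : ℕ) :
    ∫ x in ball (0 : E) 1, ‖x‖ ^ p ∂μ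
      = Module.finrank ℝ E / (Module.finrank ℝ E + p) * μ.real (ball 0 1) := by
  set d := Module.finrank ℝ E
  have hd : 0 < d := Module.finrank_pos
  have hind : (ball (0 : E) 1).indicator (‖·‖ ^ p) = fun x ↦ (Iio 1).indicator (· ^ p) ‖x‖ := by
    ext x
    simp [indicator]
  have hradial : ∫ y in Ioi (0 : ℝ), y ^ (d - 1) • (Iio 1).indicator (· ^ p) y = 1 / (d + p) := by
    have hpow : ∀ y : ℝ,
        y ^ (d - 1) • (Iio 1).indicator (· ^ p) y = (Iio 1).indicator (· ^ (d - 1 + p)) y := by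
      intro y
      by_cases hy : y < 1 <;> simp [indicator, hy, pow_add]
    simp_rw [hpow]
    rw [setIntegral_indicator measurableSet_Iio, Ioi_inter_Iio, ← integral_Ioc_eq_integral_Ioo,
      ← intervalIntegral.integral_of_le zero_le_one, integral_pow]
    rw [one_pow, zero_pow (Nat.succ_ne_zero _), sub_zero]
    push_cast [Nat.cast_sub hd]
    ring
  rw [← integral_indicator measurableSet_ball, hind, integral_fun_norm_addHaar μ, hradial,
    nsmul_eq_mul, smul_eq_mul]
  field_simp
  ring

end Radial

section Complex

variable {V : Type*} [NormedAddCommGroup V] [InnerProductSpace ℂ V] [FiniteDimensional ℂ V]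
  [MeasurableSpace V] [BorelSpace V] (μ : Measure V) [μ.IsAddHaarMeasure]

theorem integrableOn_unitBall_inner_mul_inner (x y : V) :
    IntegrableOn (fun η ↦ ⟪x, η⟫ * ⟪η, y⟫) (ball 0 1) μ :=
  ((by fun_prop : Continuous fun η ↦ ⟪x, η⟫ * ⟪η, y⟫).locallyIntegrable.integrableOn_isCompact
    (isCompact_closedBall 0 1)).mono_set ball_subset_closedBall

noncomputable def unitBallSecondMoment : V →ₗ⋆[ℂ] V →ₗ[ℂ] ℂ :=
  LinearMap.mk₂'ₛₗ (starRingEnd ℂ) (RingHom.id ℂ)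
    (fun x y ↦ ∫ η in ball (0 : V) 1, ⟪x, η⟫ * ⟪η, y⟫ ∂μ)
    (fun x₁ x₂ y ↦ by
      simp only [inner_add_left, add_mul]
      exact integral_add (integrableOn_unitBall_inner_mul_inner μ x₁ y)
        (integrableOn_unitBall_inner_mul_inner μ x₂ y))
    (fun c x y ↦ by
      simp only [inner_smul_left, mul_assoc]
      exact integral_const_mul _ _)
    (fun x y₁ y₂ ↦ by
      simp only [inner_add_right, mul_add]
      exact integral_add (integrableOn_unitBall_inner_mul_inner μ x y₁)
        (integrableOn_unitBall_inner_mul_inner μ x y₂))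
    (fun c x y ↦ by
      simp only [inner_smul_right, mul_left_comm _ c]
      exact integral_const_mul _ _)

theorem unitBallSecondMoment_apply (x y : V) :
    unitBallSecondMoment μ x y = ∫ η in ball (0 : V) 1, ⟪x, η⟫ * ⟪η, y⟫ ∂μ :=
  rfl

theorem unitBallSecondMoment_map (U : V ≃ₗᵢ[ℂ] V) (x y : V) :
    unitBallSecondMoment μ (U x) (U y) = unitBallSecondMoment μ x y := by
  have h : ∀ η, ⟪U x, η⟫ * ⟪η, U y⟫ = ⟪x, U.symm η⟫ * ⟪U.symm η, y⟫ := fun η ↦ by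
    rw [U.inner_map_eq_flip, ← U.symm.inner_map_map η (U y), U.symm_apply_apply]
  simp only [unitBallSecondMoment_apply, h]
  exact U.symm.setIntegral_ball_comp μ (fun η ↦ ⟪x, η⟫ * ⟪η, y⟫) 1

theorem unitBallSecondMoment_eq_zero_of_inner_eq_zero {x y : V} (h : ⟪x, y⟫ = 0) :
    unitBallSecondMoment μ x y = 0 := by
  let R := (ℂ ∙ y)ᗮ.reflection
  have hx : R x = x := Submodule.reflection_mem_subspace_eq_self
    ((Submodule.mem_orthogonal_singleton_iff_inner_left).2 h)
  have hy : R y = -y := Submodule.reflection_orthogonalComplement_singleton_eq_neg y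
  have := unitBallSecondMoment_map μ R x y
  rw [hx, hy, map_neg] at this
  linear_combination -this / 2

theorem OrthonormalBasis.unitBallSecondMoment_self_eq {ι : Type*} [Fintype ι] [DecidableEq ι]
    (b : OrthonormalBasis ι ℂ V) (i j : ι) :
    unitBallSecondMoment μ (b i) (b i) = unitBallSecondMoment μ (b j) (b j) := by
  have hU : b.equiv b (Equiv.swap i j) (b i) = b j := by
    rw [b.equiv_apply_basis, Equiv.swap_apply_left]
  rw [← hU, unitBallSecondMoment_map]

theorem OrthonormalBasis.sum_unitBallSecondMoment_self {ι : Type*} [Fintype ι]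
    (b : OrthonormalBasis ι ℂ V) :
    ∑ i, unitBallSecondMoment μ (b i) (b i) = ∫ η in ball (0 : V) 1, ((‖η‖ ^ 2 : ℝ) : ℂ) ∂μ := by
  simp only [unitBallSecondMoment_apply]
  rw [← integral_finsetSum _ fun i _ ↦ integrableOn_unitBall_inner_mul_inner μ (b i) (b i)]
  congr 1 with η
  calc ∑ i, ⟪b i, η⟫ * ⟪η, b i⟫ = ⟪η, η⟫ := by
        rw [← b.sum_inner_mul_inner η η]
        exact Finset.sum_congr rfl fun i _ ↦ mul_comm _ _
    _ = _ := by exact_mod_cast inner_self_eq_norm_sq_to_K η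

theorem OrthonormalBasis.unitBallSecondMoment_self {ι : Type*} [Fintype ι] [DecidableEq ι]
    (b : OrthonormalBasis ι ℂ V) (i : ι) :
    unitBallSecondMoment μ (b i) (b i) = μ.real (ball 0 1) / (Module.finrank ℂ V + 1) := by
  have : Nontrivial V := ⟨⟨b i, 0, b.orthonormal.ne_zero i⟩⟩
  have hn : (Module.finrank ℂ V : ℂ) ≠ 0 := Nat.cast_ne_zero.2 Module.finrank_pos.ne'
  have htrace := b.sum_unitBallSecondMoment_self μ
  rw [Finset.sum_congr rfl fun j _ ↦ b.unitBallSecondMoment_self_eq μ j i, Finset.sum_const,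
    Finset.card_univ, ← Module.finrank_eq_card_basis b.toBasis, integral_complex_ofReal,
    setIntegral_unitBall_norm_pow, finrank_real_of_complex, nsmul_eq_mul] at htrace
  push_cast at htrace
  have hn1 : (Module.finrank ℂ V : ℂ) + 1 ≠ 0 := by norm_cast
  field_simp at htrace ⊢
  exact htrace

theorem unitBallSecondMoment_eq_smul_innerₛₗ :
    unitBallSecondMoment μ = (μ.real (ball 0 1) / (Module.finrank ℂ V + 1) : ℂ) • innerₛₗ ℂ := by
  let b := stdOrthonormalBasis ℂ V
  refine LinearMap.ext_basis b.toBasis b.toBasis fun i j ↦ ?_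
  simp only [b.coe_toBasis, LinearMap.smul_apply, innerₛₗ_apply_apply, smul_eq_mul]
  obtain rfl | hij := eq_or_ne i j
  · rw [b.unitBallSecondMoment_self μ, inner_self_eq_one_of_norm_eq_one (b.orthonormal.1 i),
      mul_one]
  · rw [unitBallSecondMoment_eq_zero_of_inner_eq_zero μ (b.orthonormal.2 hij),
      b.orthonormal.2 hij, mul_zero]

end Complex

/-- On a finite-dimensional complex inner product space of complex
dimension `n`, the dual Binet–Legendre form of the open unit ball evaluated at two
functionals equals the inner product of their Riesz representatives. -/
theorem dualBL_unitBall_eq_inner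
    {V : Type*} [NormedAddCommGroup V] [InnerProductSpace ℂ V] [FiniteDimensional ℂ V]
    [MeasurableSpace V] [BorelSpace V]
    (μ : Measure V) [μ.IsAddHaarMeasure]
    (n : ℕ) (hn : Module.finrank ℂ V = n)
    (θ φ : V →ₗ[ℂ] ℂ) (xθ xφ : V)
    (hθ : ∀ v : V, θ v = ⟪xθ, v⟫) (hφ : ∀ v : V, φ v = ⟪xφ, v⟫) :
    (((n : ℂ) + 1) / ((μ {v : V | ‖v‖ < 1}).toReal : ℂ)) *
        ∫ η in {v : V | ‖v‖ < 1}, θ η * (starRingEnd ℂ) (φ η) ∂μ = ⟪xθ, xφ⟫ := by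
  have hball : {v : V | ‖v‖ < 1} = ball 0 1 := Set.ext fun _ ↦ mem_ball_zero_iff.symm
  have hvol : (μ.real (ball (0 : V) 1) : ℂ) ≠ 0 := Complex.ofReal_ne_zero.2 <|
    (measureReal_ne_zero_iff measure_ball_lt_top.ne).2 (measure_ball_pos μ 0 one_pos).ne'
  have hintegral :
      ∫ η in ball 0 1, θ η * (starRingEnd ℂ) (φ η) ∂μ = unitBallSecondMoment μ xθ xφ := by
    simp only [hθ, hφ, inner_conj_symm]
    rfl
  rw [hball, hintegral, unitBallSecondMoment_eq_smul_innerₛₗ, hn, ← measureReal_def]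
  simp only [LinearMap.smul_apply, innerₛₗ_apply_apply, smul_eq_mul]
  field_simp
end

section
/- Let V be a finite-dimensional complex normed vector space of complex dimension n, with Borel σ-algebra and additive Haar measure μ. Let 0 < α ≤ β, and let Ω₁, Ω₂ ⊆ V be nonempty bounded open sets satisfying (1/β)•Ω₁ ⊆ Ω₂ ⊆ (1/α)•Ω₁. Then for every complex-linear functional θ : V → ℂ, the dual Binet–Legendre forms satisfy (α^{2n}/β^{2n+2}) · g*_{Ω₁}(θ, θ) ≤ g*_{Ω₂}(θ, θ) ≤ (β^{2n}/α^{2n+2}) · g*_{Ω₁}(θ, θ). -/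
open MeasureTheory
open scoped Pointwise

/-- The dual complex Binet–Legendre form of a set `Ω`:
`g*_Ω(θ, φ) = ((n+1)/μ(Ω)) ∫_Ω θ(η) conj(φ(η)) dμ(η)`. -/
noncomputable def dualBL {V : Type*} [NormedAddCommGroup V] [NormedSpace ℂ V]
    [MeasurableSpace V] (μ : Measure V) (n : ℕ) (Ω : Set V)
    (θ φ : V →ₗ[ℂ] ℂ) : ℂ :=
  (((n : ℂ) + 1) / ((μ Ω).toReal : ℂ)) * ∫ η in Ω, θ η * (starRingEnd ℂ) (φ η) ∂μ

lemma dualBL_re {V : Type*} [NormedAddCommGroup V] [NormedSpace ℂ V]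
    [MeasurableSpace V] (μ : Measure V) (n : ℕ) (Ω : Set V) (θ : V →ₗ[ℂ] ℂ) :
    (dualBL μ n Ω θ θ).re
      = (((n : ℝ) + 1) / (μ Ω).toReal) * ∫ η in Ω, Complex.normSq (θ η) ∂μ := by
  unfold dualBL
  have h : ∀ η, θ η * (starRingEnd ℂ) (θ η) = ((Complex.normSq (θ η) : ℝ) : ℂ) :=
    fun η => Complex.mul_conj _
  simp_rw [h]
  have hio : ∫ η in Ω, ((Complex.normSq (θ η) : ℝ) : ℂ) ∂μ
      = ((∫ η in Ω, Complex.normSq (θ η) ∂μ : ℝ) : ℂ) := integral_ofReal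
  rw [hio]
  have h2 : (((n : ℂ) + 1) / (((μ Ω).toReal : ℝ) : ℂ))
      = ((((n : ℝ) + 1) / (μ Ω).toReal : ℝ) : ℂ) := by push_cast; ring
  rw [h2, ← Complex.ofReal_mul, Complex.ofReal_re]

lemma normSq_setIntegral_smul {V : Type*} [NormedAddCommGroup V] [NormedSpace ℂ V]
    [FiniteDimensional ℂ V] [MeasurableSpace V] [BorelSpace V]
    (μ : Measure V) [μ.IsAddHaarMeasure]
    (n : ℕ) (hn : Module.finrank ℂ V = n) (θ : V →ₗ[ℂ] ℂ)
    {c : ℝ} (hc : 0 < c) (S : Set V) :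
    ∫ x in c • S, Complex.normSq (θ x) ∂μ
      = c ^ (2 * n + 2) * ∫ x in S, Complex.normSq (θ x) ∂μ := by
  have hd : Module.finrank ℝ V = 2 * n := by
    rw [← hn, ← Module.finrank_mul_finrank ℝ ℂ V, Complex.finrank_real_complex]
  have h := MeasureTheory.Measure.setIntegral_comp_smul_of_pos μ
    (fun x => Complex.normSq (θ x)) S hc
  have h2 : ∀ x : V, Complex.normSq (θ (c • x)) = c ^ 2 * Complex.normSq (θ x) := by
    intro x
    have : θ (c • x) = (c : ℂ) * θ x := by
      rw [show (c • x : V) = ((c:ℂ) • x) from (Complex.coe_smul c x).symm, _root_.map_smul, smul_eq_mul]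
    rw [this, Complex.normSq_mul, Complex.normSq_ofReal]
    ring
  simp only [h2] at h
  rw [MeasureTheory.integral_const_mul] at h
  rw [hd] at h
  have hcpow : (0:ℝ) < c ^ (2 * n) := pow_pos hc _
  have := h.symm
  rw [smul_eq_mul] at this
  have h3 : ∫ x in c • S, Complex.normSq (θ x) ∂μ
      = c ^ (2 * n) * (c ^ 2 * ∫ x in S, Complex.normSq (θ x) ∂μ) := by
    field_simp at this ⊢
    linarith [this]
  rw [h3, pow_add]; ring

lemma addHaar_smul_toReal {V : Type*} [NormedAddCommGroup V] [NormedSpace ℂ V]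
    [FiniteDimensional ℂ V] [MeasurableSpace V] [BorelSpace V]
    (μ : Measure V) [μ.IsAddHaarMeasure]
    (n : ℕ) (hn : Module.finrank ℂ V = n)
    {c : ℝ} (hc : 0 < c) (S : Set V) :
    (μ (c • S)).toReal = c ^ (2 * n) * (μ S).toReal := by
  have hd : Module.finrank ℝ V = 2 * n := by
    rw [← hn, ← Module.finrank_mul_finrank ℝ ℂ V, Complex.finrank_real_complex]
  rw [Measure.addHaar_smul_of_nonneg μ hc.le S, hd, ENNReal.toReal_mul,
    ENNReal.toReal_ofReal (by positivity)]

/-- If `(1/β)•Ω₁ ⊆ Ω₂ ⊆ (1/α)•Ω₁` with `0 < α ≤ β`, then for every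
complex-linear functional `θ`,
`(α^{2n}/β^{2n+2}) g*_{Ω₁}(θ,θ) ≤ g*_{Ω₂}(θ,θ) ≤ (β^{2n}/α^{2n+2}) g*_{Ω₁}(θ,θ)`. -/
theorem dualBL_comparison
    {V : Type*} [NormedAddCommGroup V] [NormedSpace ℂ V] [FiniteDimensional ℂ V]
    [MeasurableSpace V] [BorelSpace V]
    (μ : Measure V) [μ.IsAddHaarMeasure]
    (n : ℕ) (hn : Module.finrank ℂ V = n)
    (α β : ℝ) (hα : 0 < α) (hαβ : α ≤ β)
    (Ω₁ Ω₂ : Set V)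
    (h₁open : IsOpen Ω₁) (h₁ne : Ω₁.Nonempty) (h₁bdd : Bornology.IsBounded Ω₁)
    (h₂open : IsOpen Ω₂) (h₂ne : Ω₂.Nonempty) (h₂bdd : Bornology.IsBounded Ω₂)
    (hsub₁ : (β⁻¹ : ℝ) • Ω₁ ⊆ Ω₂) (hsub₂ : Ω₂ ⊆ (α⁻¹ : ℝ) • Ω₁)
    (θ : V →ₗ[ℂ] ℂ) :
    (α ^ (2 * n) / β ^ (2 * n + 2)) * (dualBL μ n Ω₁ θ θ).re ≤ (dualBL μ n Ω₂ θ θ).re ∧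
      (dualBL μ n Ω₂ θ θ).re ≤ (β ^ (2 * n) / α ^ (2 * n + 2)) * (dualBL μ n Ω₁ θ θ).re := by
  have hβ : 0 < β := lt_of_lt_of_le hα hαβ
  set f : V → ℝ := fun x => Complex.normSq (θ x) with hf_def
  have hθc : Continuous θ := θ.continuous_of_finiteDimensional
  have hfc : Continuous f := Complex.continuous_normSq.comp hθc
  -- integrability on bounded sets
  have hInt : ∀ S : Set V, Bornology.IsBounded S → IntegrableOn f S μ := by
    intro S hS
    haveI : ProperSpace V := FiniteDimensional.proper ℂ V
    have hK : IsCompact (closure S) := hS.isCompact_closure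
    exact ((hfc.continuousOn).integrableOn_compact hK).mono_set subset_closure
  -- measures
  set m₁ := (μ Ω₁).toReal with hm₁def
  set m₂ := (μ Ω₂).toReal with hm₂def
  have hμ₁pos : 0 < μ Ω₁ := h₁open.measure_pos μ h₁ne
  have hμ₂pos : 0 < μ Ω₂ := h₂open.measure_pos μ h₂ne
  have hμ₁fin : μ Ω₁ < ⊤ := h₁bdd.measure_lt_top
  have hμ₂fin : μ Ω₂ < ⊤ := h₂bdd.measure_lt_top
  have hm₁pos : 0 < m₁ := ENNReal.toReal_pos hμ₁pos.ne' hμ₁fin.ne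
  have hm₂pos : 0 < m₂ := ENNReal.toReal_pos hμ₂pos.ne' hμ₂fin.ne
  -- integrals
  set I₁ := ∫ x in Ω₁, f x ∂μ with hI₁def
  set I₂ := ∫ x in Ω₂, f x ∂μ with hI₂def
  have hI₁nn : 0 ≤ I₁ := setIntegral_nonneg h₁open.measurableSet fun x _ => Complex.normSq_nonneg _
  have hI₂nn : 0 ≤ I₂ := setIntegral_nonneg h₂open.measurableSet fun x _ => Complex.normSq_nonneg _
  -- scaling facts
  have hβinv : (0:ℝ) < β⁻¹ := inv_pos.2 hβ
  have hαinv : (0:ℝ) < α⁻¹ := inv_pos.2 hα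
  have hbdd_scaled : Bornology.IsBounded ((α⁻¹ : ℝ) • Ω₁) := h₁bdd.smul₀ _
  -- integral monotonicity
  have hI_lower : β⁻¹ ^ (2 * n + 2) * I₁ ≤ I₂ := by
    have := normSq_setIntegral_smul μ n hn θ hβinv Ω₁
    rw [← this]
    exact setIntegral_mono_set (hInt Ω₂ h₂bdd)
      (Filter.Eventually.of_forall fun x => Complex.normSq_nonneg _)
      (HasSubset.Subset.eventuallyLE hsub₁)
  have hI_upper : I₂ ≤ α⁻¹ ^ (2 * n + 2) * I₁ := by
    have := normSq_setIntegral_smul μ n hn θ hαinv Ω₁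
    rw [← this]
    exact setIntegral_mono_set (hInt _ hbdd_scaled)
      (Filter.Eventually.of_forall fun x => Complex.normSq_nonneg _)
      (HasSubset.Subset.eventuallyLE hsub₂)
  -- measure monotonicity
  have hm_lower : β⁻¹ ^ (2 * n) * m₁ ≤ m₂ := by
    rw [← addHaar_smul_toReal μ n hn hβinv Ω₁]
    exact ENNReal.toReal_mono hμ₂fin.ne (measure_mono hsub₁)
  have hm_upper : m₂ ≤ α⁻¹ ^ (2 * n) * m₁ := by
    rw [← addHaar_smul_toReal μ n hn hαinv Ω₁]
    refine ENNReal.toReal_mono ?_ (measure_mono hsub₂)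
    rw [Measure.addHaar_smul_of_nonneg μ hαinv.le Ω₁]
    exact (ENNReal.mul_lt_top ENNReal.ofReal_lt_top hμ₁fin).ne
  -- rewrite the dual forms
  rw [dualBL_re, dualBL_re, ← hm₁def, ← hm₂def, ← hI₁def, ← hI₂def]
  have hr : (0:ℝ) < (n : ℝ) + 1 := by positivity
  have hA : (0:ℝ) < α ^ (2 * n) := pow_pos hα _
  have hA2 : (0:ℝ) < α ^ (2 * n + 2) := pow_pos hα _
  have hB : (0:ℝ) < β ^ (2 * n) := pow_pos hβ _
  have hB2 : (0:ℝ) < β ^ (2 * n + 2) := pow_pos hβ _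
  rw [inv_pow] at hI_lower hI_upper hm_lower hm_upper
  -- clear denominators
  have h1 : α ^ (2 * n) * m₂ ≤ m₁ := by
    have := mul_le_mul_of_nonneg_left hm_upper hA.le
    rwa [mul_inv_cancel_left₀ hA.ne'] at this
  have h2 : I₁ ≤ β ^ (2 * n + 2) * I₂ := by
    have := mul_le_mul_of_nonneg_left hI_lower hB2.le
    rwa [mul_inv_cancel_left₀ hB2.ne'] at this
  have h3 : α ^ (2 * n + 2) * I₂ ≤ I₁ := by
    have := mul_le_mul_of_nonneg_left hI_upper hA2.le
    rwa [mul_inv_cancel_left₀ hA2.ne'] at this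
  have h4 : m₁ ≤ β ^ (2 * n) * m₂ := by
    have := mul_le_mul_of_nonneg_left hm_lower hB.le
    rwa [mul_inv_cancel_left₀ hB.ne'] at this
  constructor
  · have e1 : α ^ (2 * n) / β ^ (2 * n + 2) * (((n:ℝ) + 1) / m₁ * I₁)
        = (α ^ (2 * n) * (((n:ℝ) + 1) * I₁)) / (β ^ (2 * n + 2) * m₁) := by
      field_simp
    have e2 : ((n:ℝ) + 1) / m₂ * I₂ = (((n:ℝ) + 1) * I₂) / m₂ := by field_simp
    rw [e1, e2, div_le_div_iff₀ (by positivity) hm₂pos]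
    nlinarith [mul_le_mul_of_nonneg_left h1 (mul_nonneg hr.le hI₁nn),
      mul_le_mul_of_nonneg_right h2 (mul_nonneg hr.le hm₁pos.le)]
  · have e1 : β ^ (2 * n) / α ^ (2 * n + 2) * (((n:ℝ) + 1) / m₁ * I₁)
        = (β ^ (2 * n) * (((n:ℝ) + 1) * I₁)) / (α ^ (2 * n + 2) * m₁) := by
      field_simp
    have e2 : ((n:ℝ) + 1) / m₂ * I₂ = (((n:ℝ) + 1) * I₂) / m₂ := by field_simp
    rw [e1, e2, div_le_div_iff₀ hm₂pos (by positivity)]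
    nlinarith [mul_le_mul_of_nonneg_left h3 (mul_nonneg hr.le hm₁pos.le),
      mul_le_mul_of_nonneg_left h4 (mul_nonneg hr.le hI₁nn)]
end

section
/- Let V be a finite-dimensional complex normed vector space of complex dimension n, with Borel σ-algebra and additive Haar measure μ. Let F₁, F₂ be pseudonorms on V with unit balls Ω₁ = {F₁ < 1} and Ω₂ = {F₂ < 1}, and suppose α·F₁(v) ≤ F₂(v) ≤ β·F₁(v) for all v ∈ V, where 0 < α ≤ β. If h₁ and h₂ are positive definite Hermitian forms on V which are the Binet–Legendre metrics of Ω₁ and Ω₂ respectively, then for every v ∈ V: (α^{2n+2}/β^{2n}) · h₁(v, v) ≤ h₂(v, v) ≤ (β^{2n+2}/α^{2n}) · h₁(v, v). -/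
open MeasureTheory

/-- A pseudonorm: nonnegative, absolutely homogeneous over `ℂ`, vanishing only at `0`,
with open bounded unit ball. -/
def IsPseudonorm {V : Type*} [NormedAddCommGroup V] [NormedSpace ℂ V]
    (F : V → ℝ) : Prop :=
  (∀ v : V, 0 ≤ F v) ∧
  (∀ (c : ℂ) (v : V), F (c • v) = ‖c‖ * F v) ∧
  (∀ v : V, F v = 0 → v = 0) ∧
  IsOpen {v : V | F v < 1} ∧ Bornology.IsBounded {v : V | F v < 1}

/-- A Hermitian form: conjugate-linear in the first argument, complex-linear in the
second, with `h(w,v) = conj (h(v,w))`. -/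
def IsHermitianForm {V : Type*} [AddCommGroup V] [Module ℂ V] (h : V → V → ℂ) : Prop :=
  (∀ (c : ℂ) (v w : V), h (c • v) w = (starRingEnd ℂ) c * h v w) ∧
  (∀ v v' w : V, h (v + v') w = h v w + h v' w) ∧
  (∀ (c : ℂ) (v w : V), h v (c • w) = c * h v w) ∧
  (∀ v w w' : V, h v (w + w') = h v w + h v w') ∧
  (∀ v w : V, h w v = (starRingEnd ℂ) (h v w))

/-- Positive definiteness: `h(v,v) > 0` for every `v ≠ 0`. -/
def IsPosDefForm {V : Type*} [AddCommGroup V] [Module ℂ V] (h : V → V → ℂ) : Prop :=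
  ∀ v : V, v ≠ 0 → 0 < (h v v).re

/-- `h` is the Binet–Legendre metric of `Ω`: there is a Riesz map `r` for `h`
(`θ(v) = h(r θ, v)` for all `v`) such that the dual Binet–Legendre form of `Ω`
coincides with `h` composed with `r`. -/
def IsBLMetric {V : Type*} [NormedAddCommGroup V] [NormedSpace ℂ V]
    [MeasurableSpace V] (μ : Measure V) (n : ℕ) (Ω : Set V)
    (h : V → V → ℂ) : Prop :=
  ∃ r : (V →ₗ[ℂ] ℂ) → V,
    (∀ (θ : V →ₗ[ℂ] ℂ) (v : V), θ v = h (r θ) v) ∧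
    (∀ θ φ : V →ₗ[ℂ] ℂ, dualBL μ n Ω θ φ = h (r θ) (r φ))

/-!
Homogeneity of the pseudonorms gives `β⁻¹ • Ω₁ ⊆ Ω₂ ⊆ α⁻¹ • Ω₁`. Under `η ↦ t • η` the Haar
measure scales by `t ^ 2n` and `∫ |θ|²` by `t ^ (2n+2)`, so this sandwich bounds
`g*_{Ω₂}(θ, θ)` by `β ^ 2n / α ^ (2n+2) · g*_{Ω₁}(θ, θ)` for every functional `θ`, and
symmetrically. An inequality between the dual forms reverses into one between `h₁` and `h₂`:
test it on `θ = h₁ v`, whose `h₁`-Riesz vector is `v`, and apply Cauchy–Schwarz for `h₂` to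
`h₂ (r₂ θ) v = h₁ v v`.
-/

open Pointwise

namespace IsHermitianForm

variable {V : Type*} [AddCommGroup V] [Module ℂ V] {h : V → V → ℂ}

lemma apply_zero_left (hh : IsHermitianForm h) (w : V) : h 0 w = 0 := by
  simpa using hh.1 0 0 w

lemma re_self_nonneg (hh : IsHermitianForm h) (hp : IsPosDefForm h) (v : V) :
    0 ≤ (h v v).re := by
  rcases eq_or_ne v 0 with rfl | hv
  · simp [hh.apply_zero_left]
  · exact (hp v hv).le

@[reducible]
def toInnerProductSpaceCore (hh : IsHermitianForm h) (hp : IsPosDefForm h) :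
    InnerProductSpace.Core ℂ V where
  inner := h
  conj_inner_symm x y := (hh.2.2.2.2 y x).symm
  re_inner_nonneg := hh.re_self_nonneg hp
  add_left := hh.2.1
  smul_left x y c := hh.1 c x y
  definite x hx := by
    by_contra hx0
    simpa [hx] using hp x hx0

lemma normSq_le (hh : IsHermitianForm h) (hp : IsPosDefForm h) (v w : V) :
    Complex.normSq (h v w) ≤ (h v v).re * (h w w).re := by
  let := hh.toInnerProductSpaceCore hp
  have hcs : ‖h v w‖ * ‖h w v‖ ≤ (h v v).re * (h w w).re :=
    InnerProductSpace.Core.inner_mul_inner_self_le (𝕜 := ℂ) v w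
  rwa [hh.2.2.2.2 v w, Complex.norm_conj, ← sq, ← Complex.normSq_eq_norm_sq] at hcs

lemma self_eq_ofReal_re (hh : IsHermitianForm h) (hp : IsPosDefForm h) (v : V) :
    h v v = ((h v v).re : ℂ) := by
  let := hh.toInnerProductSpaceCore hp
  exact (InnerProductSpace.Core.ofReal_normSq_eq_inner_self (𝕜 := ℂ) v).symm

lemma eq_of_forall_apply_eq (hh : IsHermitianForm h) (hp : IsPosDefForm h) {a b : V}
    (hab : ∀ w, h a w = h b w) : a = b := by
  let := hh.toInnerProductSpaceCore hp
  rw [← sub_eq_zero, ← InnerProductSpace.Core.inner_self_eq_zero (𝕜 := ℂ)]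
  exact (InnerProductSpace.Core.inner_sub_left (𝕜 := ℂ) a b _).trans (sub_eq_zero.2 (hab _))

lemma re_self_le_of_dual_le {h₁ h₂ : V → V → ℂ} (hh₁ : IsHermitianForm h₁)
    (hp₁ : IsPosDefForm h₁) (hh₂ : IsHermitianForm h₂) (hp₂ : IsPosDefForm h₂)
    {r₁ r₂ : (V →ₗ[ℂ] ℂ) → V} (hr₁ : ∀ θ v, θ v = h₁ (r₁ θ) v)
    (hr₂ : ∀ θ v, θ v = h₂ (r₂ θ) v) {c : ℝ}
    (hc : ∀ θ, (h₂ (r₂ θ) (r₂ θ)).re ≤ c * (h₁ (r₁ θ) (r₁ θ)).re) (v : V) :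
    (h₁ v v).re ≤ c * (h₂ v v).re := by
  rcases eq_or_ne v 0 with rfl | hv
  · simp [hh₁.apply_zero_left, hh₂.apply_zero_left]
  let θ : V →ₗ[ℂ] ℂ :=
    { toFun := h₁ v
      map_add' := hh₁.2.2.2.1 v
      map_smul' := fun c w => hh₁.2.2.1 c v w }
  have hr₁θ : r₁ θ = v := hh₁.eq_of_forall_apply_eq hp₁ fun w => (hr₁ θ w).symm
  have hcs : (h₁ v v).re ^ 2 ≤ (h₂ (r₂ θ) (r₂ θ)).re * (h₂ v v).re := by
    have hθv : h₂ (r₂ θ) v = (h₁ v v).re := (hr₂ θ v).symm.trans (hh₁.self_eq_ofReal_re hp₁ v)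
    simpa [hθv, Complex.normSq_ofReal, sq] using hh₂.normSq_le hp₂ (r₂ θ) v
  have hdual := hc θ
  rw [hr₁θ] at hdual
  nlinarith [hp₁ v hv, hh₂.re_self_nonneg hp₂ v]

end IsHermitianForm

namespace IsPseudonorm

variable {V : Type*} [NormedAddCommGroup V] [NormedSpace ℂ V] {F G : V → ℝ}

lemma map_zero (hF : IsPseudonorm F) : F 0 = 0 := by
  simpa using hF.2.1 0 0

lemma smul_of_nonneg (hF : IsPseudonorm F) {t : ℝ} (ht : 0 ≤ t) (v : V) :
    F (t • v) = t * F v := by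
  rw [← Complex.coe_smul, hF.2.1]
  simp [ht]

lemma setOf_lt_one_subset_smul (hF : IsPseudonorm F) {t : ℝ} (ht : 0 < t)
    (hFG : ∀ v, F v ≤ t * G v) : {v | G v < 1} ⊆ t • {v | F v < 1} := by
  intro v hv
  refine ⟨t⁻¹ • v, ?_, smul_inv_smul₀ ht.ne' v⟩
  calc F (t⁻¹ • v) = t⁻¹ * F v := hF.smul_of_nonneg (inv_nonneg.2 ht.le) v
    _ ≤ G v := (inv_mul_le_iff₀ ht).2 (hFG v)
    _ < 1 := hv

lemma measure_setOf_lt_one_pos [MeasurableSpace V] (μ : Measure V) [μ.IsOpenPosMeasure]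
    (hF : IsPseudonorm F) : 0 < μ {v | F v < 1} :=
  hF.2.2.2.1.measure_pos μ ⟨0, by simp [hF.map_zero]⟩

end IsPseudonorm

section BinetLegendre

open Module

variable {V : Type*} [NormedAddCommGroup V] [NormedSpace ℂ V] [MeasurableSpace V]
  (μ : Measure V) (n : ℕ)

lemma re_dualBL_self (Ω : Set V) (θ : V →ₗ[ℂ] ℂ) :
    (dualBL μ n Ω θ θ).re
      = ((n : ℝ) + 1) / (μ Ω).toReal * ∫ η in Ω, Complex.normSq (θ η) ∂μ := by
  simp only [dualBL, Complex.mul_conj]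
  norm_cast

variable [FiniteDimensional ℂ V] [BorelSpace V] [μ.IsAddHaarMeasure]

lemma toReal_addHaar_smul {t : ℝ} (ht : 0 ≤ t) (s : Set V) :
    (μ (t • s)).toReal = t ^ finrank ℝ V * (μ s).toReal := by
  rw [Measure.addHaar_smul_of_nonneg μ ht, ENNReal.toReal_mul,
    ENNReal.toReal_ofReal (by positivity)]

lemma dualBL_smul_set {t : ℝ} (ht : 0 < t) (Ω : Set V) (θ φ : V →ₗ[ℂ] ℂ) :
    dualBL μ n (t • Ω) θ φ = (t : ℂ) ^ 2 * dualBL μ n Ω θ φ := by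
  have hscale : ∀ η : V, θ (t • η) * starRingEnd ℂ (φ (t • η))
      = (t : ℂ) ^ 2 * (θ η * starRingEnd ℂ (φ η)) := fun η => by
    simp only [LinearMap.map_smul_of_tower, Complex.real_smul, map_mul, Complex.conj_ofReal]
    ring
  have hint := Measure.setIntegral_comp_smul_of_pos μ
    (fun η => θ η * starRingEnd ℂ (φ η)) Ω ht
  simp only [hscale, integral_const_mul] at hint
  rw [eq_inv_smul_iff₀ (by positivity)] at hint
  have ht' : (t : ℂ) ≠ 0 := by exact_mod_cast ht.ne'
  rw [dualBL, dualBL, toReal_addHaar_smul μ ht.le, ← hint, Complex.real_smul]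
  push_cast
  field_simp

lemma re_dualBL_le_of_subset {A Ω B : Set V} (hAΩ : A ⊆ Ω) (hΩB : Ω ⊆ B) (hA : 0 < μ A)
    (hB : Bornology.IsBounded B) (θ : V →ₗ[ℂ] ℂ) :
    (dualBL μ n Ω θ θ).re ≤ (μ B).toReal / (μ A).toReal * (dualBL μ n B θ θ).re := by
  have hBfin : μ B ≠ ⊤ := hB.measure_lt_top.ne
  have hmA : 0 < (μ A).toReal :=
    ENNReal.toReal_pos hA.ne' (measure_ne_top_of_subset (hAΩ.trans hΩB) hBfin)
  have hmAΩ : (μ A).toReal ≤ (μ Ω).toReal :=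
    ENNReal.toReal_mono (measure_ne_top_of_subset hΩB hBfin) (measure_mono hAΩ)
  have hmB : 0 < (μ B).toReal :=
    hmA.trans_le (ENNReal.toReal_mono hBfin (measure_mono (hAΩ.trans hΩB)))
  have hint : IntegrableOn (fun η => Complex.normSq (θ η)) B μ :=
    ((Complex.continuous_normSq.comp θ.continuous_of_finiteDimensional).continuousOn
      |>.integrableOn_compact hB.isCompact_closure).mono_set subset_closure
  have hIΩB : ∫ η in Ω, Complex.normSq (θ η) ∂μ ≤ ∫ η in B, Complex.normSq (θ η) ∂μ :=
    setIntegral_mono_set hint (ae_of_all _ fun _ => Complex.normSq_nonneg _) hΩB.eventuallyLE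
  have hIΩ : 0 ≤ ∫ η in Ω, Complex.normSq (θ η) ∂μ :=
    integral_nonneg fun _ => Complex.normSq_nonneg _
  rw [re_dualBL_self, re_dualBL_self]
  calc ((n : ℝ) + 1) / (μ Ω).toReal * ∫ η in Ω, Complex.normSq (θ η) ∂μ
      ≤ ((n : ℝ) + 1) / (μ A).toReal * ∫ η in B, Complex.normSq (θ η) ∂μ :=
        mul_le_mul (div_le_div_of_nonneg_left (by positivity) hmA hmAΩ) hIΩB hIΩ (by positivity)
    _ = _ := by field_simp

lemma re_dualBL_le_of_subset_smul (hn : finrank ℂ V = n) {Ω Ω' : Set V}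
    (hΩ : Bornology.IsBounded Ω) (hΩpos : 0 < μ Ω) {a b : ℝ} (ha : 0 < a) (hb : 0 < b)
    (hΩ'Ω : Ω' ⊆ a⁻¹ • Ω) (hΩΩ' : Ω ⊆ b • Ω') (θ : V →ₗ[ℂ] ℂ) :
    (dualBL μ n Ω' θ θ).re ≤ b ^ (2 * n) / a ^ (2 * n + 2) * (dualBL μ n Ω θ θ).re := by
  have hd : finrank ℝ V = 2 * n := by rw [finrank_real_of_complex, hn]
  have hA : 0 < μ (b⁻¹ • Ω) := by
    rw [Measure.addHaar_smul_of_nonneg μ (by positivity)]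
    exact ENNReal.mul_pos (ENNReal.ofReal_pos.2 (by positivity)).ne' hΩpos.ne'
  have hm : (μ Ω).toReal ≠ 0 := (ENNReal.toReal_pos hΩpos.ne' hΩ.measure_lt_top.ne).ne'
  have key := re_dualBL_le_of_subset μ n ((Set.subset_smul_set_iff₀ hb.ne').1 hΩΩ') hΩ'Ω hA
    (hΩ.smul₀ a⁻¹) θ
  rw [toReal_addHaar_smul μ (by positivity), toReal_addHaar_smul μ (by positivity),
    dualBL_smul_set μ n (by positivity), hd, ← Complex.ofReal_pow, Complex.re_ofReal_mul] at key
  convert key using 1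
  simp only [inv_pow]
  field_simp
  ring

end BinetLegendre

/-- If `α F₁ ≤ F₂ ≤ β F₁` for pseudonorms `F₁, F₂` with `0 < α ≤ β`, then
the Binet–Legendre metrics `h₁, h₂` of their unit balls satisfy
`(α^{2n+2}/β^{2n}) h₁(v,v) ≤ h₂(v,v) ≤ (β^{2n+2}/α^{2n}) h₁(v,v)`. -/
theorem blMetric_comparison
    {V : Type*} [NormedAddCommGroup V] [NormedSpace ℂ V] [FiniteDimensional ℂ V]
    [MeasurableSpace V] [BorelSpace V]
    (μ : Measure V) [μ.IsAddHaarMeasure]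
    (n : ℕ) (hn : Module.finrank ℂ V = n)
    (F₁ F₂ : V → ℝ) (hF₁ : IsPseudonorm F₁) (hF₂ : IsPseudonorm F₂)
    (α β : ℝ) (hα : 0 < α) (hαβ : α ≤ β)
    (hcomp : ∀ v : V, α * F₁ v ≤ F₂ v ∧ F₂ v ≤ β * F₁ v)
    (h₁ h₂ : V → V → ℂ)
    (h₁herm : IsHermitianForm h₁) (h₁pos : IsPosDefForm h₁)
    (h₂herm : IsHermitianForm h₂) (h₂pos : IsPosDefForm h₂)
    (h₁BL : IsBLMetric μ n {v : V | F₁ v < 1} h₁)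
    (h₂BL : IsBLMetric μ n {v : V | F₂ v < 1} h₂) :
    ∀ v : V,
      (α ^ (2 * n + 2) / β ^ (2 * n)) * (h₁ v v).re ≤ (h₂ v v).re ∧
        (h₂ v v).re ≤ (β ^ (2 * n + 2) / α ^ (2 * n)) * (h₁ v v).re := by
  intro v
  have hβ : 0 < β := hα.trans_le hαβ
  obtain ⟨r₁, hr₁, hg₁⟩ := h₁BL
  obtain ⟨r₂, hr₂, hg₂⟩ := h₂BL
  have hΩ₂₁ : {v : V | F₂ v < 1} ⊆ α⁻¹ • {v | F₁ v < 1} :=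
    hF₁.setOf_lt_one_subset_smul (inv_pos.2 hα) fun w => (le_inv_mul_iff₀ hα).2 (hcomp w).1
  have hΩ₁₂ : {v : V | F₁ v < 1} ⊆ β • {v | F₂ v < 1} :=
    hF₂.setOf_lt_one_subset_smul hβ fun w => (hcomp w).2
  have hdual₂₁ : ∀ θ, (h₂ (r₂ θ) (r₂ θ)).re
      ≤ β ^ (2 * n) / α ^ (2 * n + 2) * (h₁ (r₁ θ) (r₁ θ)).re := fun θ => by
    rw [← hg₁, ← hg₂]
    exact re_dualBL_le_of_subset_smul μ n hn hF₁.2.2.2.2 (hF₁.measure_setOf_lt_one_pos μ)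
      hα hβ hΩ₂₁ hΩ₁₂ θ
  have hdual₁₂ : ∀ θ, (h₁ (r₁ θ) (r₁ θ)).re
      ≤ α⁻¹ ^ (2 * n) / β⁻¹ ^ (2 * n + 2) * (h₂ (r₂ θ) (r₂ θ)).re := fun θ => by
    rw [← hg₁, ← hg₂]
    exact re_dualBL_le_of_subset_smul μ n hn hF₂.2.2.2.2 (hF₂.measure_setOf_lt_one_pos μ)
      (inv_pos.2 hβ) (inv_pos.2 hα) (by rwa [inv_inv]) hΩ₂₁ θ
  constructor
  · have h₁₂ := h₁herm.re_self_le_of_dual_le h₁pos h₂herm h₂pos hr₁ hr₂ hdual₂₁ v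
    rwa [← inv_div, inv_mul_le_iff₀ (by positivity)]
  · have h₂₁ := h₂herm.re_self_le_of_dual_le h₂pos h₁herm h₁pos hr₂ hr₁ hdual₁₂ v
    rwa [inv_pow, inv_pow, div_inv_eq_mul, inv_mul_eq_div] at h₂₁
end

section
/- For j = 1, …, p, let V_j be a finite-dimensional complex normed vector space of complex dimension n_j, with Borel σ-algebra and additive Haar measure μ_j, and let Ω_j ⊆ V_j be a nonempty bounded open set which is symmetric (v ∈ Ω_j iff -v ∈ Ω_j). Let V = V₁ × ⋯ × V_p with product measure μ = μ₁ ⊗ ⋯ ⊗ μ_p, let Ω = Ω₁ × ⋯ × Ω_p, and let n = n₁ + ⋯ + n_p. For a complex-linear functional θ on V and each j, let θ_j denote the complex-linear functional on V_j given by θ_j(x) = θ(0, …, 0, x, 0, …, 0) (x placed in the j-th slot). Then for all complex-linear functionals θ, φ on V, the dual Binet–Legendre forms satisfy g*_Ω(θ, φ) = Σ_{j=1}^{p} ((n+1)/(n_j+1)) · g*_{Ω_j}(θ_j, φ_j). -/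
/-!
Dividing by `μ Ω` turns `g*_Ω(θ, φ)` into `n + 1` times the second moment `∫ θ conj(φ)` under the
uniform probability measure `μ[|Ω]`. For a product set this measure is the product of the uniform
measures on the factors, so the coordinates are independent; as each `Ω_j` is symmetric, every
`θ_j` has mean zero. Hence in `θ η * conj (φ η) = (∑ j, θ_j η_j) * ∑ k, conj (φ_k η_k)` only the
diagonal terms `j = k` survive integration, and each of them is a second moment on one factor.
-/

open MeasureTheory

open ProbabilityTheory
open scoped ENNReal

theorem Continuous.integrableOn_of_isBounded {X E : Type*} [MetricSpace X] [ProperSpace X]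
    [MeasurableSpace X] [OpensMeasurableSpace X] [NormedAddCommGroup E] {μ : Measure X}
    [IsFiniteMeasureOnCompacts μ] {f : X → E} (hf : Continuous f) {s : Set X}
    (hs : Bornology.IsBounded s) : IntegrableOn f s μ :=
  (hf.continuousOn.integrableOn_compact hs.isCompact_closure).mono_set subset_closure

theorem MeasureTheory.IntegrableOn.integrable_cond {α E : Type*} [MeasurableSpace α]
    [NormedAddCommGroup E] {μ : Measure α} {s : Set α} {f : α → E}
    (hf : IntegrableOn f s μ) : Integrable f μ[|s] := by
  by_cases hs : μ s = 0
  · simp [cond_eq_zero_of_meas_eq_zero hs]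
  · exact hf.smul_measure (ENNReal.inv_ne_top.2 hs)

theorem MeasureTheory.integral_eq_zero_of_odd {G E : Type*} [MeasurableSpace G] [AddGroup G]
    [MeasurableNeg G] [NormedAddCommGroup E] [NormedSpace ℝ E] (μ : Measure G)
    [μ.IsNegInvariant] {f : G → E} (hf : ∀ x, f (-x) = -f x) : ∫ x, f x ∂μ = 0 := by
  have : IsAddTorsionFree E := .of_isTorsionFree ℝ E
  simp_rw [← self_eq_neg, ← integral_neg, ← hf, integral_neg_eq_self]

namespace ProbabilityTheory

variable {α E : Type*} [MeasurableSpace α] [NormedAddCommGroup E] [NormedSpace ℝ E]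

theorem integral_cond (μ : Measure α) (s : Set α) (f : α → E) :
    ∫ x, f x ∂μ[|s] = (μ s).toReal⁻¹ • ∫ x in s, f x ∂μ := by
  rw [cond, integral_smul_measure, ENNReal.toReal_inv]

theorem isNegInvariant_cond [AddGroup α] [MeasurableNeg α] (μ : Measure α) [μ.IsNegInvariant]
    {s : Set α} (hs : MeasurableSet s) (hsym : -s = s) : (μ[|s]).IsNegInvariant := by
  refine ⟨Measure.ext fun t _ => ?_⟩
  rw [Measure.neg_apply, cond_apply hs, cond_apply hs, ← Measure.measure_neg μ (s ∩ t),
    Set.inter_neg, hsym]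

theorem cond_pi {ι : Type*} [Fintype ι] {X : ι → Type*} [∀ i, MeasurableSpace (X i)]
    (μ : ∀ i, Measure (X i)) [∀ i, SigmaFinite (μ i)] {s : ∀ i, Set (X i)}
    (hs : ∀ i, MeasurableSet (s i)) (hfin : ∀ i, μ i (s i) ≠ ∞) :
    (Measure.pi μ)[|Set.univ.pi s] = Measure.pi fun i => (μ i)[|s i] := by
  refine (Measure.pi_eq fun t _ => ?_).symm
  simp_rw [cond_apply (MeasurableSet.univ_pi hs), cond_apply (hs _), ← Set.pi_inter_distrib,
    Measure.pi_pi, Finset.prod_mul_distrib]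
  rw [ENNReal.prod_inv_distrib fun i _ j _ _ => Or.inr (hfin j)]

theorem integral_pi_sum_mul_sum {𝕜 ι : Type*} [RCLike 𝕜] [Fintype ι]
    {X : ι → Type*} [∀ i, MeasurableSpace (X i)] {ν : ∀ i, Measure (X i)}
    [∀ i, IsProbabilityMeasure (ν i)] {f g : ∀ i, X i → 𝕜}
    (hf : ∀ i, Integrable (f i) (ν i)) (hg : ∀ i, Integrable (g i) (ν i))
    (hfg : ∀ i, Integrable (fun x => f i x * g i x) (ν i)) (hf₀ : ∀ i, ∫ x, f i x ∂ν i = 0) :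
    ∫ x, (∑ i, f i (x i)) * ∑ j, g j (x j) ∂Measure.pi ν = ∑ i, ∫ x, f i x * g i x ∂ν i := by
  classical
  have hindep : iIndepFun (fun i (x : ∀ i, X i) => x i) (Measure.pi ν) :=
    iIndepFun_pi (X := fun _ => id) fun _ => aemeasurable_id
  have hmap : ∀ i, (Measure.pi ν).map (fun x => x i) = ν i :=
    fun i => (measurePreserving_eval ν i).map_eq
  have hcross : ∀ i j, i ≠ j →
      IndepFun (fun x : ∀ i, X i => f i (x i)) (fun x => g j (x j)) (Measure.pi ν) := by
    intro i j hij
    refine (hindep.indepFun hij).comp₀ (measurable_pi_apply i).aemeasurable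
      (measurable_pi_apply j).aemeasurable ?_ ?_
    · rw [hmap]; exact (hf i).aemeasurable
    · rw [hmap]; exact (hg j).aemeasurable
  have hint : ∀ i j, Integrable (fun x : ∀ i, X i => f i (x i) * g j (x j)) (Measure.pi ν) := by
    intro i j
    by_cases hij : i = j
    · subst hij; exact integrable_comp_eval (hfg i)
    · exact (hcross i j hij).integrable_mul (integrable_comp_eval (hf i))
        (integrable_comp_eval (hg j))
  have hterm : ∀ i j, ∫ x, f i (x i) * g j (x j) ∂Measure.pi ν
      = if i = j then ∫ x, f i x * g i x ∂ν i else 0 := by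
    intro i j
    split_ifs with hij
    · subst hij; exact integral_comp_eval (hfg i).aestronglyMeasurable
    · rw [(hcross i j hij).integral_fun_mul_eq_mul_integral
        (integrable_comp_eval (hf i)).aestronglyMeasurable
        (integrable_comp_eval (hg j)).aestronglyMeasurable,
        integral_comp_eval (hf i).aestronglyMeasurable, hf₀, zero_mul]
  simp_rw [Finset.sum_mul_sum]
  rw [integral_finsetSum _ fun i _ => integrable_finsetSum _ fun j _ => hint i j]
  simp_rw [integral_finsetSum _ fun j _ => hint _ j, hterm, Finset.sum_ite_eq, Finset.mem_univ,
    if_true]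

end ProbabilityTheory

theorem map_eq_sum_map_single {ι N F : Type*} [Fintype ι] [DecidableEq ι] {M : ι → Type*}
    [∀ i, AddCommMonoid (M i)] [AddCommMonoid N] [FunLike F (∀ i, M i) N]
    [AddMonoidHomClass F (∀ i, M i) N] (f : F) (x : ∀ i, M i) :
    f x = ∑ i, f (Pi.single i (x i)) := by
  conv_lhs => rw [← Finset.univ_sum_single x]
  exact map_sum f _ _

theorem dualBL_eq_mul_integral_cond {V : Type*} [NormedAddCommGroup V] [NormedSpace ℂ V]
    [MeasurableSpace V] (μ : Measure V) (n : ℕ) (Ω : Set V) (θ φ : V →ₗ[ℂ] ℂ) :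
    dualBL μ n Ω θ φ = ((n : ℂ) + 1) * ∫ η, θ η * starRingEnd ℂ (φ η) ∂μ[|Ω] := by
  rw [dualBL, integral_cond, Complex.real_smul, Complex.ofReal_inv, div_eq_mul_inv, mul_assoc]

theorem dualBL_pi_general
    {p : ℕ} (V : Fin p → Type*) [∀ j, NormedAddCommGroup (V j)]
    [∀ j, NormedSpace ℂ (V j)] [∀ j, FiniteDimensional ℂ (V j)]
    [∀ j, MeasurableSpace (V j)] [∀ j, BorelSpace (V j)]
    (μ : ∀ j, Measure (V j)) [∀ j, (μ j).IsAddHaarMeasure]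
    (nj : Fin p → ℕ)
    (Ω : ∀ j, Set (V j))
    (hopen : ∀ j, IsOpen (Ω j)) (hne : ∀ j, (Ω j).Nonempty)
    (hbdd : ∀ j, Bornology.IsBounded (Ω j))
    (hsym : ∀ j, ∀ v : V j, v ∈ Ω j ↔ -v ∈ Ω j)
    (n : ℕ)
    (θ φ : (∀ j, V j) →ₗ[ℂ] ℂ) :
    dualBL (Measure.pi μ) n (Set.univ.pi Ω) θ φ =
      ∑ j, (((n : ℂ) + 1) / ((nj j : ℂ) + 1)) *
        dualBL (μ j) (nj j) (Ω j)
          (θ.comp (LinearMap.single ℂ V j)) (φ.comp (LinearMap.single ℂ V j)) := by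
  classical
  have hmeas j : MeasurableSet (Ω j) := (hopen j).measurableSet
  have hfin j : μ j (Ω j) ≠ ∞ := (hbdd j).measure_lt_top.ne
  have hprob j : IsProbabilityMeasure (μ j)[|Ω j] :=
    cond_isProbabilityMeasure_of_finite ((hopen j).measure_ne_zero _ (hne j)) (hfin j)
  have hneg j : ((μ j)[|Ω j]).IsNegInvariant :=
    isNegInvariant_cond _ (hmeas j) (Set.ext fun v => (hsym j v).symm)
  have hint j {f : V j → ℂ} (hf : Continuous f) : Integrable f (μ j)[|Ω j] :=
    (hf.integrableOn_of_isBounded (hbdd j)).integrable_cond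
  have hθ j : Continuous (θ.comp (LinearMap.single ℂ V j)) :=
    LinearMap.continuous_of_finiteDimensional _
  have hφ j : Continuous fun x => starRingEnd ℂ (φ.comp (LinearMap.single ℂ V j) x) :=
    Complex.continuous_conj.comp (LinearMap.continuous_of_finiteDimensional _)
  have hsplit (η : ∀ j, V j) : θ η * starRingEnd ℂ (φ η) =
      (∑ j, θ.comp (LinearMap.single ℂ V j) (η j)) *
        ∑ j, starRingEnd ℂ (φ.comp (LinearMap.single ℂ V j) (η j)) := by
    rw [map_eq_sum_map_single θ, map_eq_sum_map_single φ, map_sum]; rfl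
  simp_rw [dualBL_eq_mul_integral_cond, cond_pi μ hmeas hfin, hsplit,
    integral_pi_sum_mul_sum (fun j => hint j (hθ j)) (fun j => hint j (hφ j))
      (fun j => hint j ((hθ j).mul (hφ j)))
      (fun j => integral_eq_zero_of_odd _ (map_neg (θ.comp (LinearMap.single ℂ V j)))),
    Finset.mul_sum, ← mul_assoc, div_mul_cancel₀ _ (Nat.cast_add_one_ne_zero (R := ℂ) (nj _))]

/-- Product formula for the dual Binet–Legendre form: for symmetric
nonempty bounded open sets `Ω j ⊆ V j` and `Ω = Ω₁ × ⋯ × Ω_p`,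
`g*_Ω(θ, φ) = Σ_j ((n+1)/(n_j+1)) g*_{Ω_j}(θ_j, φ_j)`, where `θ_j` is the restriction
of `θ` to the `j`-th factor. -/
theorem dualBL_pi
    {p : ℕ} (V : Fin p → Type*) [∀ j, NormedAddCommGroup (V j)]
    [∀ j, NormedSpace ℂ (V j)] [∀ j, FiniteDimensional ℂ (V j)]
    [∀ j, MeasurableSpace (V j)] [∀ j, BorelSpace (V j)]
    (μ : ∀ j, Measure (V j)) [∀ j, (μ j).IsAddHaarMeasure]
    (nj : Fin p → ℕ) (hnj : ∀ j, Module.finrank ℂ (V j) = nj j)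
    (Ω : ∀ j, Set (V j))
    (hopen : ∀ j, IsOpen (Ω j)) (hne : ∀ j, (Ω j).Nonempty)
    (hbdd : ∀ j, Bornology.IsBounded (Ω j))
    (hsym : ∀ j, ∀ v : V j, v ∈ Ω j ↔ -v ∈ Ω j)
    (n : ℕ) (hn : n = ∑ j, nj j)
    (θ φ : (∀ j, V j) →ₗ[ℂ] ℂ) :
    dualBL (Measure.pi μ) n (Set.univ.pi Ω) θ φ =
      ∑ j, (((n : ℂ) + 1) / ((nj j : ℂ) + 1)) *
        dualBL (μ j) (nj j) (Ω j)
          (θ.comp (LinearMap.single ℂ V j)) (φ.comp (LinearMap.single ℂ V j)) :=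
  dualBL_pi_general V μ nj Ω hopen hne hbdd hsym n θ φ
end
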